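/- If D is an adequate link diagram with n crossings, then the breadth of its Kauffman bracket equals 2n + 2|s_+D| + 2|s_-D| - 4. -/

import Mathlib

open LaurentPolynomial

namespace KnotPaper

/-- A combinatorial model of a link diagram: a set `V` of crossings, each with four
edge-ends (labelled `0,1,2,3` counterclockwise), together with a fixed-point-free
involution `arcs` on edge-ends describing the arcs/strands connecting the crossings. -/
structure Diagram (V : Type) where
  arcs : V × Fin 4 → V × Fin 4
  arcs_invol : Function.Involutive arcs
  arcs_ne : ∀ x, arcs x ≠ x

/-- A state assigns `true` (positive split) or `false` (negative split) to each crossing. -/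
abbrev DState (V : Type) := V → Bool

/-- The pairing of the four edge-ends of a crossing induced by splitting it:
positively (`0-1`, `2-3`) or negatively (`0-3`, `1-2`). -/
def resolveEnd {V : Type} (s : DState V) (x : V × Fin 4) : V × Fin 4 :=
  (x.1,
    if s x.1 then
      (if x.2 = 0 then 1 else if x.2 = 1 then 0 else if x.2 = 2 then 3 else 2)
    else
      (if x.2 = 0 then 3 else if x.2 = 3 then 0 else if x.2 = 1 then 2 else 1))

/-- Two edge-ends are related if joined by an arc of the diagram or by the splitting. -/
def circuitRel {V : Type} (D : Diagram V) (s : DState V) (x y : V × Fin 4) : Prop :=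
  D.arcs x = y ∨ resolveEnd s x = y

/-- `circuits D s` is the number of circuits `|sD|` of the state `s`: the number of
connected components of the splitted diagram. -/
noncomputable def circuits {V : Type} (D : Diagram V) (s : DState V) : ℕ :=
  Nat.card (Quotient (Relation.EqvGen.setoid (circuitRel D s)))

/-- The all-positive state `s₊`. -/
def sPlus (V : Type) : DState V := fun _ => true

/-- The all-negative state `s₋`. -/
def sMinus (V : Type) : DState V := fun _ => false

/-- `∑ i, s(i)` where positive splits count `+1` and negative splits `-1`. -/
def signSum {V : Type} [Fintype V] (s : DState V) : ℤ :=
  ∑ c : V, (if s c then (1 : ℤ) else -1)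

/-- The Kauffman bracket `⟨D⟩ = ∑ₛ A^{∑ᵢ s(i)} (-A⁻² - A²)^{|sD| - 1}`. -/
noncomputable def kauffman {V : Type} [Fintype V] [DecidableEq V] (D : Diagram V) :
    LaurentPolynomial ℤ :=
  ∑ s : DState V, T (signSum s) * (-T (-2) - T 2) ^ (circuits D s - 1)

/-- `s` and `s'` differ at exactly one crossing. -/
def OneOff {V : Type} (s s' : DState V) : Prop :=
  ∃ i, s i ≠ s' i ∧ ∀ j, j ≠ i → s j = s' j

/-- `D` is plus-adequate: `|s₊D| > |sD|` for every state `s` with exactly one negative split. -/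
def PlusAdequate {V : Type} (D : Diagram V) : Prop :=
  ∀ s : DState V, OneOff (sPlus V) s → circuits D s < circuits D (sPlus V)

/-- `D` is minus-adequate: `|s₋D| > |sD|` for every state `s` with exactly one positive split. -/
def MinusAdequate {V : Type} (D : Diagram V) : Prop :=
  ∀ s : DState V, OneOff (sMinus V) s → circuits D s < circuits D (sMinus V)

/-- `D` is adequate if it is both plus- and minus-adequate. -/
def Adequate {V : Type} (D : Diagram V) : Prop := PlusAdequate D ∧ MinusAdequate D

/-- The maximal exponent `M_p` of a (nonzero) Laurent polynomial (junk value `0` for `p = 0`). -/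
noncomputable def maxDeg (p : LaurentPolynomial ℤ) : ℤ := WithBot.unbotD 0 p.coeff.support.max

/-- The minimal exponent `m_p` of a (nonzero) Laurent polynomial (junk value `0` for `p = 0`). -/
noncomputable def minDeg (p : LaurentPolynomial ℤ) : ℤ := WithTop.untopD 0 p.coeff.support.min

/-- The breadth `B(p) = M_p - m_p` of a Laurent polynomial. -/
noncomputable def breadth (p : LaurentPolynomial ℤ) : ℤ := maxDeg p - minDeg p

end KnotPaper

/-! The state sum of `⟨D⟩` has one term `A^{σ(s)} δ^{|sD|-1}` per state `s`, where
`δ = -A⁻² - A²`; its exponents lie between `σ(s) - 2|sD| + 2` and `σ(s) + 2|sD| - 2`, and the two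
extreme coefficients are `±1`. Changing one split changes `|sD|` by at most one, because only the
circuits through the four ends at that crossing are affected. So, by induction on the number of
negative splits, plus-adequacy gives `σ(s) + 2|sD| ≤ n + 2|s₊D| - 4` for every `s ≠ s₊`: the
exponent `n + 2|s₊D| - 2` comes from `s₊` alone and is the top one. Dually, minus-adequacy makes
`-n - 2|s₋D| + 2` the bottom exponent. -/

open scoped Finset

namespace LaurentPolynomial

theorem coeff_T_mul {R : Type*} [Semiring R] (n : ℤ) (f : R[T;T⁻¹]) (k : ℤ) :
    (T n * f).coeff k = f.coeff (k - n) := by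
  rw [T, AddMonoidAlgebra.coeff_single_mul_apply, one_mul, neg_add_eq_sub]

theorem coeff_sum_T_mul {R ι : Type*} [Semiring R] [Fintype ι] (e : ι → ℤ) (f : ι → R[T;T⁻¹])
    (k : ℤ) : (∑ i, T (e i) * f i).coeff k = ∑ i, (f i).coeff (k - e i) := by
  simp only [AddMonoidAlgebra.coeff_sum, Finsupp.finsetSum_apply, coeff_T_mul]

end LaurentPolynomial

namespace Setoid

variable {α : Type*}

theorem card_quotient_le_of_le [Finite α] {s t : Setoid α} (h : s ≤ t) :
    Nat.card (Quotient t) ≤ Nat.card (Quotient s) :=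
  Nat.card_le_card_of_surjective (map_of_le h) (Quotient.ind fun x => ⟨Quotient.mk s x, rfl⟩)

def mergeClasses (s : Setoid α) (a c : α) : Setoid α where
  r x y := s x y ∨ ((s x a ∨ s x c) ∧ (s y a ∨ s y c))
  iseqv := by
    have transfer : ∀ {x y z}, s x y → s x z → s y z := fun hxy hxz => s.trans (s.symm hxy) hxz
    refine ⟨fun x => .inl (s.refl x), ?_, ?_⟩
    · rintro x y (h | ⟨hx, hy⟩)
      · exact .inl (s.symm h)
      · exact .inr ⟨hy, hx⟩
    · rintro x y z (hxy | ⟨hx, hy⟩) (hyz | ⟨hy', hz⟩)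
      · exact .inl (s.trans hxy hyz)
      · exact .inr ⟨hy'.imp (s.trans hxy) (s.trans hxy), hz⟩
      · exact .inr ⟨hx, hy.imp (transfer hyz) (transfer hyz)⟩
      · exact .inr ⟨hx, hz⟩

theorem le_mergeClasses (s : Setoid α) (a c : α) : s ≤ s.mergeClasses a c := fun _ _ => .inl

theorem card_quotient_le_card_quotient_mergeClasses_add_one [Finite α] (s : Setoid α) (a c : α) :
    Nat.card (Quotient s) ≤ Nat.card (Quotient (s.mergeClasses a c)) + 1 := by
  classical
  -- Merging identifies only the classes of `a` and `c`, so this map is injective.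
  let φ : Quotient s → Option (Quotient (s.mergeClasses a c)) := fun q =>
    if q = Quotient.mk s a then none else some (map_of_le (s.le_mergeClasses a c) q)
  have hφ : φ.Injective := by
    refine Quotient.ind fun x => Quotient.ind fun y hxy => ?_
    by_cases hx : Quotient.mk s x = Quotient.mk s a <;>
      by_cases hy : Quotient.mk s y = Quotient.mk s a <;>
      simp only [φ, hx, hy, if_true, if_false, reduceCtorEq, Option.some.injEq] at hxy
    · exact hx.trans hy.symm
    · rcases Quotient.exact hxy with h | ⟨hxa | hxc, hya | hyc⟩
      · exact Quotient.sound h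
      · exact absurd (Quotient.sound hxa) hx
      · exact absurd (Quotient.sound hxa) hx
      · exact absurd (Quotient.sound hya) hy
      · exact Quotient.sound (s.trans hxc (s.symm hyc))
  rw [← Finite.card_option]
  exact Nat.card_le_card_of_injective φ hφ

end Setoid

namespace KnotPaper

noncomputable def loopValue : LaurentPolynomial ℤ := -T (-2) - T 2

theorem coeff_mul_loopValue (f : LaurentPolynomial ℤ) (k : ℤ) :
    (f * loopValue).coeff k = -f.coeff (k + 2) - f.coeff (k - 2) := by
  rw [mul_comm, loopValue, sub_mul, neg_mul]
  simp only [AddMonoidAlgebra.coeff_sub, AddMonoidAlgebra.coeff_neg, Finsupp.sub_apply,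
    Finsupp.neg_apply, coeff_T_mul, sub_neg_eq_add]

theorem invert_loopValue : invert loopValue = loopValue := by
  simp only [loopValue, map_sub, map_neg, invert_T, neg_neg]
  ring

theorem coeff_loopValue_pow_neg (m : ℕ) (k : ℤ) :
    (loopValue ^ m).coeff (-k) = (loopValue ^ m).coeff k := by
  rw [← invert_apply, map_pow, invert_loopValue]

theorem coeff_loopValue_pow_of_lt {m : ℕ} {k : ℤ} (hk : 2 * m < k) :
    (loopValue ^ m).coeff k = 0 := by
  induction m generalizing k with
  | zero => rw [pow_zero, ← T_zero, T_apply, if_neg (by omega)]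
  | succ m ih => rw [pow_succ, coeff_mul_loopValue, ih (by omega), ih (by omega)]; simp

theorem coeff_loopValue_pow_of_lt_neg {m : ℕ} {k : ℤ} (hk : k < -(2 * m)) :
    (loopValue ^ m).coeff k = 0 := by
  rw [← neg_neg k, coeff_loopValue_pow_neg]
  exact coeff_loopValue_pow_of_lt (by omega)

theorem coeff_loopValue_pow_two_mul (m : ℕ) : (loopValue ^ m).coeff (2 * m) = (-1) ^ m := by
  induction m with
  | zero => rw [pow_zero, ← T_zero, T_apply]; simp
  | succ m ih =>
    rw [pow_succ, coeff_mul_loopValue, coeff_loopValue_pow_of_lt (by omega)]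
    push_cast
    rw [show 2 * ((m : ℤ) + 1) - 2 = 2 * m by ring, ih]
    ring

theorem coeff_loopValue_pow_neg_two_mul (m : ℕ) :
    (loopValue ^ m).coeff (-(2 * m)) = (-1) ^ m := by
  rw [coeff_loopValue_pow_neg, coeff_loopValue_pow_two_mul]

theorem maxDeg_eq_of_coeff {p : LaurentPolynomial ℤ} {M : ℤ} (hM : p.coeff M ≠ 0)
    (h : ∀ k, M < k → p.coeff k = 0) : maxDeg p = M := by
  suffices p.coeff.support.max = M by rw [maxDeg, this]; rfl
  refine le_antisymm (Finset.max_le fun k hk => ?_) (Finset.le_max (Finsupp.mem_support_iff.mpr hM))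
  exact WithBot.coe_le_coe.mpr (not_lt.mp fun hlt => Finsupp.mem_support_iff.mp hk (h k hlt))

theorem minDeg_eq_of_coeff {p : LaurentPolynomial ℤ} {m : ℤ} (hm : p.coeff m ≠ 0)
    (h : ∀ k, k < m → p.coeff k = 0) : minDeg p = m := by
  suffices p.coeff.support.min = m by rw [minDeg, this]; rfl
  refine le_antisymm (Finset.min_le (Finsupp.mem_support_iff.mpr hm)) (Finset.le_min fun k hk => ?_)
  exact WithTop.coe_le_coe.mpr (not_lt.mp fun hlt => Finsupp.mem_support_iff.mp hk (h k hlt))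

theorem maxDeg_sum_T_mul_loopValue_pow {ι : Type*} [Fintype ι] (e : ι → ℤ) (m : ι → ℕ) (i₀ : ι)
    (h : ∀ i ≠ i₀, e i + 2 * m i < e i₀ + 2 * m i₀) :
    maxDeg (∑ i, T (e i) * loopValue ^ m i) = e i₀ + 2 * m i₀ := by
  refine maxDeg_eq_of_coeff ?_ fun k hk => ?_ <;> rw [coeff_sum_T_mul]
  · rw [Finset.sum_eq_single_of_mem i₀ (Finset.mem_univ _)
      fun i _ hi => coeff_loopValue_pow_of_lt (by linarith [h i hi]), add_sub_cancel_left,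
      coeff_loopValue_pow_two_mul]
    exact pow_ne_zero _ (by norm_num)
  · refine Finset.sum_eq_zero fun i _ => coeff_loopValue_pow_of_lt ?_
    obtain rfl | hi := eq_or_ne i i₀
    · omega
    · linarith [h i hi]

theorem minDeg_sum_T_mul_loopValue_pow {ι : Type*} [Fintype ι] (e : ι → ℤ) (m : ι → ℕ) (i₀ : ι)
    (h : ∀ i ≠ i₀, e i₀ - 2 * m i₀ < e i - 2 * m i) :
    minDeg (∑ i, T (e i) * loopValue ^ m i) = e i₀ - 2 * m i₀ := by
  refine minDeg_eq_of_coeff ?_ fun k hk => ?_ <;> rw [coeff_sum_T_mul]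
  · rw [Finset.sum_eq_single_of_mem i₀ (Finset.mem_univ _)
      fun i _ hi => coeff_loopValue_pow_of_lt_neg (by linarith [h i hi]), sub_sub_cancel_left,
      coeff_loopValue_pow_neg_two_mul]
    exact pow_ne_zero _ (by norm_num)
  · refine Finset.sum_eq_zero fun i _ => coeff_loopValue_pow_of_lt_neg ?_
    obtain rfl | hi := eq_or_ne i i₀
    · omega
    · linarith [h i hi]

section

variable {V : Type}

def circuitSetoid (D : Diagram V) (s : DState V) : Setoid (V × Fin 4) :=
  Relation.EqvGen.setoid (circuitRel D s)

theorem circuitSetoid_resolveEnd (D : Diagram V) (s : DState V) (x : V × Fin 4) :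
    circuitSetoid D s x (resolveEnd s x) :=
  .rel _ _ (.inr rfl)

theorem circuitSetoid_zero_or_two (D : Diagram V) (s : DState V) (v : V) (t : Fin 4) :
    circuitSetoid D s (v, t) (v, 0) ∨ circuitSetoid D s (v, t) (v, 2) := by
  have h0 := circuitSetoid_resolveEnd D s (v, 0)
  have h2 := circuitSetoid_resolveEnd D s (v, 2)
  cases hv : s v <;> simp [resolveEnd, hv] at h0 h2 <;> fin_cases t
  all_goals first
    | exact .inl ((circuitSetoid D s).refl' _) | exact .inr ((circuitSetoid D s).refl' _)
    | exact .inl ((circuitSetoid D s).symm' h0) | exact .inr ((circuitSetoid D s).symm' h2)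

theorem resolveEnd_update_of_ne [DecidableEq V] (s : DState V) {i : V} (b : Bool)
    {x : V × Fin 4} (hx : x.1 ≠ i) :
    resolveEnd (Function.update s i b) x = resolveEnd s x := by
  simp only [resolveEnd, Function.update_of_ne hx]

theorem circuitSetoid_update_le [DecidableEq V] (D : Diagram V) (s : DState V) (i : V)
    (b : Bool) :
    circuitSetoid D (Function.update s i b) ≤ (circuitSetoid D s).mergeClasses (i, 0) (i, 2) := by
  refine Setoid.eqvGen_le ?_
  rintro x y (h | rfl)
  · exact .inl (.rel _ _ (.inl h))
  · by_cases hx : x.1 = i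
    · obtain ⟨v, t⟩ := x
      obtain rfl : v = i := hx
      exact .inr ⟨circuitSetoid_zero_or_two D s v t, circuitSetoid_zero_or_two D s v _⟩
    · rw [resolveEnd_update_of_ne s b hx]
      exact .inl (circuitSetoid_resolveEnd D s x)

theorem circuits_le_circuits_update_add_one [Finite V] [DecidableEq V] (D : Diagram V)
    (s : DState V) (i : V) (b : Bool) :
    circuits D s ≤ circuits D (Function.update s i b) + 1 :=
  ((circuitSetoid D s).card_quotient_le_card_quotient_mergeClasses_add_one _ _).trans
    (Nat.add_le_add_right (Setoid.card_quotient_le_of_le (circuitSetoid_update_le D s i b)) 1)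

theorem filter_update_ne_eq_erase [Fintype V] [DecidableEq V] (s : DState V) (i : V) (b : Bool) :
    ({j | Function.update s i b j ≠ b} : Finset V) = ({j | s j ≠ b} : Finset V).erase i := by
  ext j
  by_cases hj : j = i <;> simp [Function.update_apply, hj]

theorem circuits_add_two_le_of_oneOff_lt [Fintype V] [DecidableEq V] (D : Diagram V) {b : Bool}
    (hD : ∀ s, OneOff (fun _ => b) s → circuits D s < circuits D fun _ => b)
    {s : DState V} (hs : s ≠ fun _ => b) :
    circuits D s + 2 ≤ circuits D (fun _ => b) + #{j | s j ≠ b} := by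
  obtain ⟨k, hk⟩ : ∃ k, #{j | s j ≠ b} = k + 1 := by
    obtain ⟨i, hi⟩ := Function.ne_iff.mp hs
    exact Nat.exists_eq_succ_of_ne_zero (Finset.card_ne_zero.mpr ⟨i, by simpa using hi⟩)
  rw [hk]
  induction k generalizing s with
  | zero =>
    obtain ⟨i, hi⟩ := Finset.card_eq_one.mp hk
    have hmem : ∀ j, s j ≠ b ↔ j = i := fun j => by
      simpa using Finset.ext_iff.mp hi j
    have hoff : OneOff (fun _ => b) s :=
      ⟨i, Ne.symm ((hmem i).mpr rfl), fun j hj => (not_not.mp (mt (hmem j).mp hj)).symm⟩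
    have := hD s hoff
    omega
  | succ k ih =>
    obtain ⟨i, hi⟩ := Finset.card_pos.mp (by omega : 0 < #{j | s j ≠ b})
    have hk' : #{j | Function.update s i b j ≠ b} = k + 1 := by
      rw [filter_update_ne_eq_erase, Finset.card_erase_of_mem hi, hk]; rfl
    have hs' : Function.update s i b ≠ fun _ => b := by
      intro h
      rw [h] at hk'
      simp at hk'
    have := ih hs' hk'
    have := circuits_le_circuits_update_add_one D s i b
    omega

theorem signSum_eq_card_sub_card [Fintype V] (s : DState V) :
    signSum s = (#{j | s j = true} : ℤ) - #{j | s j = false} := by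
  rw [signSum, Finset.sum_ite]
  simp only [Finset.sum_const, Bool.not_eq_true, nsmul_eq_mul, mul_one, mul_neg]
  ring

theorem card_filter_true_add_card_filter_false [Fintype V] (s : DState V) :
    #{j | s j = true} + #{j | s j = false} = Fintype.card V := by
  simpa using Finset.card_filter_add_card_filter_not (s := Finset.univ) (fun j => s j = true)

theorem signSum_add_two_mul_circuits_add_four_le [Fintype V] [DecidableEq V] {D : Diagram V}
    (hD : PlusAdequate D) {s : DState V} (hs : s ≠ sPlus V) :
    signSum s + 2 * circuits D s + 4 ≤ Fintype.card V + 2 * circuits D (sPlus V) := by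
  have h : circuits D s + 2 ≤ circuits D (sPlus V) + #{j | s j ≠ true} :=
    circuits_add_two_le_of_oneOff_lt D hD hs
  simp only [ne_eq, Bool.not_eq_true] at h
  have := card_filter_true_add_card_filter_false s
  rw [signSum_eq_card_sub_card]
  omega

theorem le_signSum_sub_two_mul_circuits [Fintype V] [DecidableEq V] {D : Diagram V}
    (hD : MinusAdequate D) {s : DState V} (hs : s ≠ sMinus V) :
    -Fintype.card V - 2 * circuits D (sMinus V) + 4 ≤ signSum s - 2 * circuits D s := by
  have h : circuits D s + 2 ≤ circuits D (sMinus V) + #{j | s j ≠ false} :=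
    circuits_add_two_le_of_oneOff_lt D hD hs
  simp only [ne_eq, Bool.not_eq_false] at h
  have := card_filter_true_add_card_filter_false s
  rw [signSum_eq_card_sub_card]
  omega

theorem signSum_sPlus [Fintype V] : signSum (sPlus V) = Fintype.card V := by
  simp [signSum, sPlus]

theorem signSum_sMinus [Fintype V] : signSum (sMinus V) = -Fintype.card V := by
  simp [signSum, sMinus]

theorem kauffman_eq_sum [Fintype V] [DecidableEq V] (D : Diagram V) :
    kauffman D = ∑ s, T (signSum s) * loopValue ^ (circuits D s - 1) :=
  rfl

theorem circuits_pos [Finite V] [Nonempty V] (D : Diagram V) (s : DState V) :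
    0 < circuits D s :=
  Nat.card_pos_iff.mpr ⟨⟨Quotient.mk _ (Classical.arbitrary _)⟩, inferInstance⟩

end

/-- If `D` is an adequate link diagram with `n` crossings, then
`B(⟨D⟩) = 2n + 2|s₊D| + 2|s₋D| - 4`. -/
theorem breadth_kauffman_adequate {V : Type} [Fintype V] [DecidableEq V]
    (D : Diagram V) (hn : 1 ≤ Fintype.card V) (hD : Adequate D) :
    breadth (kauffman D) =
      2 * (Fintype.card V : ℤ) + 2 * circuits D (sPlus V) + 2 * circuits D (sMinus V) - 4 := by
  have : Nonempty V := Fintype.card_pos_iff.mp hn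
  have hpos := circuits_pos D
  have hmax : maxDeg (kauffman D) =
      signSum (sPlus V) + 2 * ((circuits D (sPlus V) - 1 : ℕ) : ℤ) := by
    refine kauffman_eq_sum D ▸ maxDeg_sum_T_mul_loopValue_pow _ _ _ fun s hs => ?_
    have := signSum_add_two_mul_circuits_add_four_le hD.1 hs
    have := hpos s
    have := hpos (sPlus V)
    rw [signSum_sPlus]
    omega
  have hmin : minDeg (kauffman D) =
      signSum (sMinus V) - 2 * ((circuits D (sMinus V) - 1 : ℕ) : ℤ) := by
    refine kauffman_eq_sum D ▸ minDeg_sum_T_mul_loopValue_pow _ _ _ fun s hs => ?_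
    have := le_signSum_sub_two_mul_circuits hD.2 hs
    have := hpos s
    have := hpos (sMinus V)
    rw [signSum_sMinus]
    omega
  have := hpos (sPlus V)
  have := hpos (sMinus V)
  rw [breadth, hmax, hmin, signSum_sPlus, signSum_sMinus]
  omega

end KnotPaper
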